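/- Let S be a dense birecurrent set and let 𝒜 be its minimal automaton, with transition morphism φ_𝒜. Then for every 𝓗-class H of the minimal ideal of the transition monoid φ_𝒜(A*), one has i(S) = Card(H) / Card(H ∩ φ_𝒜(S)), where i(S) is the index of S. -/

import Mathlib

namespace Birec

variable {A : Type*}

/-- The left quotient `u⁻¹S = {v | u v ∈ S}`. -/
def leftQuot (S : Set (List A)) (u : List A) : Set (List A) := {v | u ++ v ∈ S}

/-- A language is recognizable iff it has finitely many left quotients (Nerode). -/
def Recognizable (S : Set (List A)) : Prop := (Set.range (leftQuot S)).Finite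

/-- The reversal `S̃` of a language. -/
def langRev (S : Set (List A)) : Set (List A) := {w | w.reverse ∈ S}

/-- A recognizable set is recurrent if its minimal automaton (whose states are the
nonempty left quotients) is strongly connected. -/
def Recurrent (S : Set (List A)) : Prop :=
  Recognizable S ∧
    ∀ u v : List A, (leftQuot S u).Nonempty → (leftQuot S v).Nonempty →
      ∃ w : List A, leftQuot S (u ++ w) = leftQuot S v

/-- A set is birecurrent if it is recurrent together with its reversal. -/
def Birecurrent (S : Set (List A)) : Prop := Recurrent S ∧ Recurrent (langRev S)

/-- A set is dense if every word is a factor of one of its words. -/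
def LangDense (S : Set (List A)) : Prop := ∀ v : List A, ∃ u w : List A, u ++ v ++ w ∈ S

end Birec
namespace Birec

variable {A : Type*}

/-- The states of the minimal automaton of `S`: the nonempty left quotients. -/
def MinStates (S : Set (List A)) : Set (Set (List A)) :=
  {q | q.Nonempty ∧ ∃ u : List A, q = leftQuot S u}

/-- The terminal states of the minimal automaton of `S`. -/
def TerminalStates (S : Set (List A)) : Set (Set (List A)) :=
  {q | q ∈ MinStates S ∧ [] ∈ q}

/-- The rank of a word in the minimal automaton of `S`: the number of states in the
image of the (partial) map induced by `w` on the states. -/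
noncomputable def mrank (S : Set (List A)) (w : List A) : ℕ :=
  {T : Set (List A) | T.Nonempty ∧ ∃ u : List A, T = leftQuot S (u ++ w)}.ncard

/-- `w` is a word of minimal nonzero rank in the minimal automaton of `S`. -/
def IsMinNonzeroMrank (S : Set (List A)) (w : List A) : Prop :=
  mrank S w ≠ 0 ∧ ∀ v : List A, mrank S v ≠ 0 → mrank S w ≤ mrank S v

/-- The set of terminal states is saturated by `w`: it is a union of classes of
the kernel of `w` (in particular it is contained in the domain of `w`). -/
def SaturatedBy (S : Set (List A)) (w : List A) : Prop :=
  (∀ q ∈ TerminalStates S, (leftQuot q w).Nonempty) ∧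
    ∀ p q : Set (List A), p ∈ MinStates S → q ∈ MinStates S →
      (leftQuot p w).Nonempty → (leftQuot q w).Nonempty →
      leftQuot p w = leftQuot q w → ([] ∈ p ↔ [] ∈ q)

/-- The degree of `S`: the minimal nonzero rank of a word in its minimal automaton. -/
noncomputable def langDegree (S : Set (List A)) : ℕ :=
  sInf {n : ℕ | n ≠ 0 ∧ ∃ w : List A, mrank S w = n}

end Birec
namespace Birec

variable {A : Type*}

open Classical in
/-- The element of the transition monoid of the minimal automaton of `S` induced by the
word `w`: a partial map (realized as an `Option`-valued map) on the states. -/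
noncomputable def transMap (S : Set (List A)) (w : List A) :
    Set (List A) → Option (Set (List A)) := fun q =>
  if q ∈ MinStates S ∧ (leftQuot q w).Nonempty then some (leftQuot q w) else none

/-- Composition of partial maps (first `f`, then `g`). -/
def pcomp {σ : Type*} (f g : σ → Option σ) : σ → Option σ := fun q => (f q).bind g

/-- The transition monoid `φ_𝒜(A*)` of the minimal automaton of `S`. -/
def transMonoid (S : Set (List A)) : Set (Set (List A) → Option (Set (List A))) :=
  Set.range (transMap S)

/-- Green's relation `𝓡` in a monoid `M` of partial maps. -/
def GreenR {σ : Type*} (M : Set (σ → Option σ)) (m n : σ → Option σ) : Prop :=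
  (∃ p ∈ M, pcomp m p = n) ∧ ∃ p ∈ M, pcomp n p = m

/-- Green's relation `𝓛` in a monoid `M` of partial maps. -/
def GreenL {σ : Type*} (M : Set (σ → Option σ)) (m n : σ → Option σ) : Prop :=
  (∃ p ∈ M, pcomp p m = n) ∧ ∃ p ∈ M, pcomp p n = m

/-- Green's relation `𝓗`. -/
def GreenH {σ : Type*} (M : Set (σ → Option σ)) (m n : σ → Option σ) : Prop :=
  GreenR M m n ∧ GreenL M m n

/-- `I` is a (two-sided) ideal of the monoid `M` of partial maps. -/
def IsIdeal {σ : Type*} (M I : Set (σ → Option σ)) : Prop :=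
  I.Nonempty ∧ I ⊆ M ∧ ∀ m ∈ I, ∀ p ∈ M, ∀ q ∈ M, pcomp (pcomp p m) q ∈ I

/-- `I` is the minimal ideal of the monoid `M` of partial maps. -/
def IsMinimalIdeal {σ : Type*} (M I : Set (σ → Option σ)) : Prop :=
  IsIdeal M I ∧ ∀ J : Set (σ → Option σ), IsIdeal M J → I ⊆ J

end Birec

/-!
By density every element of the transition monoid has nonzero rank, so the minimal ideal consists
of the elements of minimal rank `d`. Fix `m` in it, with image `I`. Every element of the monoid is
defined and injective on `I`, so right multiplication by an element `y` with image `I` permutes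
the finite set of elements with image `I`; this gives inverses of `y` on `I`, and `h ↦ h y` maps
the `𝓗`-class `H` of `m` into itself. Evaluation at a point `p₀ ∈ I` with `m p₀ = m i` (`i` the
initial state) splits `H` into `d` fibres, which recurrence lets such maps `h ↦ h y` permute
transitively, so they all have the same size `N`. An element `h ∈ H` lies in `φ(S)` iff
`h i = h p₀` is terminal, so `Card(H ∩ φ(S)) = N · Card(I ∩ T)`; finally saturation identifies
`I ∩ T` with the `k` images of terminal states under `w`. Both sides are thus `d / k`.
-/

namespace Birec

theorem ncard_eq_ncard_mul_of_ncard_fiber {α β : Type*} {f : α → β} {s : Set α} {t : Set β}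
    {n : ℕ} (hs : s.Finite) (ht : t.Finite) (hf : Set.MapsTo f s t)
    (hn : ∀ b ∈ t, {a ∈ s | f a = b}.ncard = n) : s.ncard = t.ncard * n := by
  classical
  rw [Set.ncard_eq_toFinset_card s hs, Set.ncard_eq_toFinset_card t ht,
    Finset.card_eq_sum_card_fiberwise (f := f) (t := ht.toFinset) (by simpa using hf),
    Finset.sum_const_nat fun b hb => ?_]
  rw [← hn b (by simpa using hb), ← Set.ncard_coe_finset]
  congr 1
  ext a
  simp

section PartialMaps

variable {σ : Type*}

def pimg (x : σ → Option σ) : Set σ := {t | ∃ q, x q = some t}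

theorem pcomp_assoc (x y z : σ → Option σ) :
    pcomp (pcomp x y) z = pcomp x (pcomp y z) := by
  funext q
  simp only [pcomp, Option.bind_assoc]
  rfl

theorem some_image_pimg_pcomp (x y : σ → Option σ) :
    some '' pimg (pcomp x y) = y '' pimg x \ {none} := by
  ext (_ | t)
  · simp
  · simp only [pimg, pcomp, Option.bind_eq_some_iff]
    simp only [Set.mem_sdiff, Set.mem_image, Set.mem_ofPred_eq, Set.mem_singleton_iff,
      Option.some_inj, reduceCtorEq, not_false_eq_true, and_true, exists_eq_right]
    exact ⟨fun ⟨q, j, hq, hj⟩ => ⟨j, ⟨q, hq⟩, hj⟩, fun ⟨j, ⟨q, hq⟩, hj⟩ => ⟨q, j, hq, hj⟩⟩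

theorem pimg_pcomp_subset (x y : σ → Option σ) : pimg (pcomp x y) ⊆ pimg y := by
  rintro t ⟨q, hq⟩
  simp only [pcomp, Option.bind_eq_some_iff] at hq
  obtain ⟨j, -, hj⟩ := hq
  exact ⟨j, hj⟩

theorem ncard_pimg_pcomp_le {x : σ → Option σ} (y : σ → Option σ) (hx : (pimg x).Finite) :
    (pimg (pcomp x y)).ncard ≤ (pimg x).ncard := by
  rw [← Set.ncard_image_of_injective _ (Option.some_injective σ), some_image_pimg_pcomp]
  exact (Set.ncard_sdiff_singleton_le _ _).trans (Set.ncard_image_le hx)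

theorem notMem_image_and_injOn_of_ncard_le {x y : σ → Option σ} (hx : (pimg x).Finite)
    (h : (pimg x).ncard ≤ (pimg (pcomp x y)).ncard) :
    none ∉ y '' pimg x ∧ Set.InjOn y (pimg x) := by
  have himg : (y '' pimg x \ {none}).ncard = (pimg (pcomp x y)).ncard := by
    rw [← some_image_pimg_pcomp, Set.ncard_image_of_injective _ (Option.some_injective σ)]
  have hle : (y '' pimg x).ncard ≤ (pimg x).ncard := Set.ncard_image_le hx
  have hsdiff := Set.ncard_sdiff_singleton_le (y '' pimg x) none
  refine ⟨fun hnone => ?_, Set.injOn_of_ncard_image_eq (by omega) hx⟩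
  have := Set.ncard_sdiff_singleton_lt_of_mem hnone (hx.image y)
  omega

theorem pcomp_eq_self_of_fixes {x e : σ → Option σ} {s : Set σ}
    (he : ∀ j ∈ s, e j = some j) (hx : pimg x ⊆ s) : pcomp x e = x := by
  funext q
  cases hq : x q with
  | none => simp [pcomp, hq]
  | some t => simp [pcomp, hq, he t (hx ⟨q, hq⟩)]

theorem GreenL.pimg_eq {M : Set (σ → Option σ)} {x y : σ → Option σ} (h : GreenL M x y) :
    pimg x = pimg y := by
  obtain ⟨⟨p, -, rfl⟩, ⟨p', -, hp'⟩⟩ := h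
  exact (hp' ▸ pimg_pcomp_subset p' _).antisymm (pimg_pcomp_subset p x)

theorem GreenR.apply_eq_apply {M : Set (σ → Option σ)} {h m : σ → Option σ}
    (hh : GreenR M h m) {p q : σ} (hpq : m p = m q) : h p = h q := by
  obtain ⟨-, ⟨x, -, rfl⟩⟩ := hh
  simp only [pcomp, hpq]

theorem finite_of_pimg_subset {M : Set (σ → Option σ)} {Q : Set σ}
    (hQ : Q.Finite) (hdom : ∀ x ∈ M, ∀ q ∉ Q, x q = none) (himg : ∀ x ∈ M, pimg x ⊆ Q) :
    M.Finite := by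
  have : Finite Q := hQ.to_subtype
  refine Set.Finite.of_finite_image (f := fun x (q : Q) => x q) ?_ ?_
  · refine (Set.Finite.pi (t := fun _ => insert none (some '' Q)) fun _ =>
      (hQ.image some).insert none).subset ?_
    rintro _ ⟨x, hx, rfl⟩ q -
    show x q ∈ insert none (some '' Q)
    cases hxq : x q with
    | none => exact Set.mem_insert none _
    | some t => exact Set.mem_insert_of_mem _ ⟨t, himg x hx ⟨q, hxq⟩, rfl⟩
  · intro x hx y hy hxy
    funext q
    by_cases hq : q ∈ Q
    · exact congrFun hxy ⟨q, hq⟩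
    · rw [hdom x hx q hq, hdom y hy q hq]

end PartialMaps

section MinimalRank

variable {σ : Type*}

structure IsFinitePSemigroup (M : Set (σ → Option σ)) : Prop where
  pcomp_mem {x y : σ → Option σ} : x ∈ M → y ∈ M → pcomp x y ∈ M
  finite : M.Finite
  finite_pimg {x : σ → Option σ} : x ∈ M → (pimg x).Finite

def IsMinRank (M : Set (σ → Option σ)) (x : σ → Option σ) : Prop :=
  x ∈ M ∧ ∀ y ∈ M, (pimg x).ncard ≤ (pimg y).ncard

def greenHClass (M : Set (σ → Option σ)) (m : σ → Option σ) : Set (σ → Option σ) :=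
  {n | n ∈ M ∧ GreenH M n m}

variable {M : Set (σ → Option σ)} {m x y : σ → Option σ}

theorem IsMinRank.ncard_pimg_eq
    (hx : IsMinRank M x) (hy : IsMinRank M y) : (pimg x).ncard = (pimg y).ncard :=
  (hx.2 y hy.1).antisymm (hy.2 x hx.1)

theorem GreenR.trans (hM : IsFinitePSemigroup M) {z : σ → Option σ}
    (hxy : GreenR M x y) (hyz : GreenR M y z) : GreenR M x z := by
  obtain ⟨⟨p, hp, rfl⟩, ⟨p', hp', hp'y⟩⟩ := hxy
  obtain ⟨⟨q, hq, rfl⟩, ⟨q', hq', hq'y⟩⟩ := hyz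
  exact ⟨⟨pcomp p q, hM.pcomp_mem hp hq, (pcomp_assoc _ _ _).symm⟩,
    ⟨pcomp q' p', hM.pcomp_mem hq' hp', by rw [← pcomp_assoc, hq'y, hp'y]⟩⟩

namespace IsMinRank

variable (hM : IsFinitePSemigroup M)
include hM

theorem apply_ne_none (hx : IsMinRank M x) (hy : y ∈ M) {j : σ} (hj : j ∈ pimg x) :
    y j ≠ none := fun h =>
  (notMem_image_and_injOn_of_ncard_le (hM.finite_pimg hx.1)
    (hx.2 _ (hM.pcomp_mem hx.1 hy))).1 ⟨j, hj, h⟩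

theorem injOn (hx : IsMinRank M x) (hy : y ∈ M) : Set.InjOn y (pimg x) :=
  (notMem_image_and_injOn_of_ncard_le (hM.finite_pimg hx.1)
    (hx.2 _ (hM.pcomp_mem hx.1 hy))).2

theorem pcomp_left (hx : IsMinRank M x) (hy : y ∈ M) : IsMinRank M (pcomp y x) :=
  ⟨hM.pcomp_mem hy hx.1, fun _ hz => (Set.ncard_le_ncard (pimg_pcomp_subset y x)
    (hM.finite_pimg hx.1)).trans (hx.2 _ hz)⟩

theorem pcomp_right (hx : IsMinRank M x) (hy : y ∈ M) : IsMinRank M (pcomp x y) :=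
  ⟨hM.pcomp_mem hx.1 hy, fun _ hz =>
    (ncard_pimg_pcomp_le y (hM.finite_pimg hx.1)).trans (hx.2 _ hz)⟩

theorem pimg_eq_of_subset (hx : IsMinRank M x) (hy : y ∈ M) (h : pimg y ⊆ pimg x) :
    pimg y = pimg x :=
  Set.eq_of_subset_of_ncard_le h (hx.2 y hy) (hM.finite_pimg hx.1)

theorem of_mem_isMinimalIdeal (hx : IsMinRank M x) {K : Set (σ → Option σ)}
    (hK : IsMinimalIdeal M K) (hm : m ∈ K) : IsMinRank M m := by
  refine hK.2 {y | IsMinRank M y} ⟨⟨x, hx⟩, fun _ hy => hy.1, ?_⟩ hm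
  intro y hy p hp q hq
  exact (hy.pcomp_left hM hp).pcomp_right hM hq

theorem injOn_pcomp (hm : IsMinRank M m) (hy : y ∈ M) :
    Set.InjOn (fun x => pcomp x y) {x | x ∈ M ∧ pimg x = pimg m} := by
  rintro x₁ ⟨-, hx₁⟩ x₂ ⟨-, hx₂⟩ h
  funext q
  have hq := congrFun h q
  cases h₁ : x₁ q with
  | none =>
    cases h₂ : x₂ q with
    | none => rfl
    | some b =>
      simp only [pcomp, h₁, h₂, Option.bind_none, Option.bind_some] at hq
      exact absurd hq.symm (hm.apply_ne_none hM hy (hx₂ ▸ ⟨q, h₂⟩))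
  | some a =>
    have ha : a ∈ pimg m := hx₁ ▸ ⟨q, h₁⟩
    cases h₂ : x₂ q with
    | none =>
      simp only [pcomp, h₁, h₂, Option.bind_none, Option.bind_some] at hq
      exact absurd hq (hm.apply_ne_none hM hy ha)
    | some b =>
      simp only [pcomp, h₁, h₂, Option.bind_some] at hq
      rw [hm.injOn hM hy ha (hx₂ ▸ ⟨q, h₂⟩) hq]

/-- Right multiplication by `y` is injective on the finite set of elements with image `pimg m`,
hence onto it. -/
theorem exists_pcomp_eq (hm : IsMinRank M m) (hy : y ∈ M) (hym : pimg y = pimg m)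
    (hx : x ∈ M) (hxm : pimg x = pimg m) :
    ∃ g ∈ M, pimg g = pimg m ∧ pcomp g y = x := by
  have hmaps : Set.MapsTo (fun x => pcomp x y) {x | x ∈ M ∧ pimg x = pimg m}
      {x | x ∈ M ∧ pimg x = pimg m} := fun g hg =>
    ⟨hM.pcomp_mem hg.1 hy,
      hm.pimg_eq_of_subset hM (hM.pcomp_mem hg.1 hy) (hym ▸ pimg_pcomp_subset g y)⟩
  have hbij := ((hM.finite.subset fun _ hx => hx.1).injOn_iff_bijOn_of_mapsTo hmaps).mp
    (hm.injOn_pcomp hM hy)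
  obtain ⟨g, hg, rfl⟩ := hbij.surjOn ⟨hx, hxm⟩
  exact ⟨g, hg.1, hg.2, rfl⟩

theorem fixes_of_pcomp_eq_self (hm : IsMinRank M m) (hy : y ∈ M) (hx : x ∈ M)
    (hxm : pimg x = pimg m) (h : pcomp x y = y) : ∀ j ∈ pimg m, x j = some j := by
  intro j hj
  obtain ⟨a, ha⟩ := Option.ne_none_iff_exists'.mp (hm.apply_ne_none hM hx hj)
  have hya : y a = y j := by
    rw [← congrFun h j]
    simp [pcomp, ha]
  rw [ha, hm.injOn hM hy (hxm ▸ ⟨j, ha⟩) hj hya]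

theorem exists_fixes (hm : IsMinRank M m) :
    ∃ e ∈ M, pimg e = pimg m ∧ ∀ j ∈ pimg m, e j = some j := by
  obtain ⟨e, he, hem, hemm⟩ := hm.exists_pcomp_eq hM hm.1 rfl hm.1 rfl
  exact ⟨e, he, hem, hm.fixes_of_pcomp_eq_self hM hm.1 he hem hemm⟩

theorem exists_rightInverse (hm : IsMinRank M m) (hy : y ∈ M) (hym : pimg y = pimg m) :
    ∃ y' ∈ M, ∀ j ∈ pimg m, pcomp y y' j = some j := by
  obtain ⟨e, he, hem, hfix⟩ := hm.exists_fixes hM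
  obtain ⟨y', hy', hy'm, hy'y⟩ := hm.exists_pcomp_eq hM hy hym he hem
  have hyy' : pcomp y y' ∈ M := hM.pcomp_mem hy hy'
  refine ⟨y', hy', hm.fixes_of_pcomp_eq_self hM hy hyy'
    (hm.pimg_eq_of_subset hM hyy' (hy'm ▸ pimg_pcomp_subset y y')) ?_⟩
  rw [pcomp_assoc, hy'y, pcomp_eq_self_of_fixes hfix hym.le]

theorem greenL (hm : IsMinRank M m) (hx : x ∈ M) (hxm : pimg x = pimg m) (hy : y ∈ M)
    (hym : pimg y = pimg m) : GreenL M x y := by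
  obtain ⟨g, hg, -, hgx⟩ := hm.exists_pcomp_eq hM hx hxm hy hym
  obtain ⟨g', hg', -, hg'y⟩ := hm.exists_pcomp_eq hM hy hym hx hxm
  exact ⟨⟨g, hg, hgx⟩, ⟨g', hg', hg'y⟩⟩

theorem greenR_pcomp (hm : IsMinRank M m) (hx : pimg x = pimg m) (hy : y ∈ M)
    (hym : pimg y = pimg m) : GreenR M (pcomp x y) x := by
  obtain ⟨y', hy', hyy'⟩ := hm.exists_rightInverse hM hy hym
  exact ⟨⟨y', hy', by rw [pcomp_assoc, pcomp_eq_self_of_fixes hyy' hx.le]⟩, ⟨y, hy, rfl⟩⟩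

theorem mem_greenHClass_self (hm : IsMinRank M m) : m ∈ greenHClass M m := by
  obtain ⟨e, he, -, hfix⟩ := hm.exists_fixes hM
  have hme : pcomp m e = m := pcomp_eq_self_of_fixes hfix le_rfl
  exact ⟨hm.1, ⟨⟨e, he, hme⟩, ⟨e, he, hme⟩⟩, hm.greenL hM hm.1 rfl hm.1 rfl⟩

theorem pcomp_mem_greenHClass (hm : IsMinRank M m) {h : σ → Option σ}
    (hh : h ∈ greenHClass M m) (hy : y ∈ M) (hym : pimg y = pimg m) :
    pcomp h y ∈ greenHClass M m := by
  have hhm : pimg h = pimg m := hh.2.2.pimg_eq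
  have hhy : pcomp h y ∈ M := hM.pcomp_mem hh.1 hy
  exact ⟨hhy, (hm.greenR_pcomp hM hhm hy hym).trans hM hh.2.1,
    hm.greenL hM hhy (hm.pimg_eq_of_subset hM hhy (hym ▸ pimg_pcomp_subset h y)) hm.1 rfl⟩

theorem exists_pimg_eq_apply_eq (hm : IsMinRank M m)
    (htrans : ∀ p ∈ pimg m, ∀ q ∈ pimg m, ∃ x ∈ M, x p = some q)
    {p q : σ} (hp : p ∈ pimg m) (hq : q ∈ pimg m) :
    ∃ y ∈ M, pimg y = pimg m ∧ y p = some q := by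
  obtain ⟨x, hx, hxp⟩ := htrans p hp q hq
  obtain ⟨e, he, hem, hfix⟩ := hm.exists_fixes hM
  have hxe : pcomp x e ∈ M := hM.pcomp_mem hx he
  refine ⟨pcomp x e, hxe, hm.pimg_eq_of_subset hM hxe (hem ▸ pimg_pcomp_subset x e), ?_⟩
  simp [pcomp, hxp, hfix q hq]

theorem ncard_fiber_le (hm : IsMinRank M m)
    (htrans : ∀ p ∈ pimg m, ∀ q ∈ pimg m, ∃ x ∈ M, x p = some q)
    (p₀ : σ) {t t' : σ} (ht : t ∈ pimg m) (ht' : t' ∈ pimg m) :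
    {h ∈ greenHClass M m | h p₀ = some t}.ncard ≤
      {h ∈ greenHClass M m | h p₀ = some t'}.ncard := by
  obtain ⟨y, hy, hym, hyt⟩ := hm.exists_pimg_eq_apply_eq hM htrans ht ht'
  have hsub : {h ∈ greenHClass M m | h p₀ = some t} ⊆ {x | x ∈ M ∧ pimg x = pimg m} :=
    fun h hh => ⟨hh.1.1, hh.1.2.2.pimg_eq⟩
  refine Set.ncard_le_ncard_of_injOn (fun h => pcomp h y) (fun h hh => ⟨?_, ?_⟩)
    ((hm.injOn_pcomp hM hy).mono hsub) (hM.finite.subset fun h hh => hh.1.1)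
  · exact hm.pcomp_mem_greenHClass hM hh.1 hy hym
  · simp [pcomp, hh.2, hyt]

theorem ncard_greenHClass_sep (hm : IsMinRank M m)
    (htrans : ∀ p ∈ pimg m, ∀ q ∈ pimg m, ∃ x ∈ M, x p = some q)
    {p₀ : σ} (hp₀ : p₀ ∈ pimg m) (T : Set σ) :
    {h ∈ greenHClass M m | ∃ t ∈ T, h p₀ = some t}.ncard =
      (pimg m ∩ T).ncard * {h ∈ greenHClass M m | h p₀ = m p₀}.ncard := by
  obtain ⟨t₀, ht₀⟩ := Option.ne_none_iff_exists'.mp (hm.apply_ne_none hM hm.1 hp₀)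
  have ht₀m : t₀ ∈ pimg m := ⟨p₀, ht₀⟩
  rw [← Set.ncard_image_of_injective _ (Option.some_injective σ), ht₀]
  refine ncard_eq_ncard_mul_of_ncard_fiber (f := fun h => h p₀)
    (hM.finite.subset fun h hh => hh.1.1) ((hM.finite_pimg hm.1).inter_of_left T |>.image _)
    ?_ ?_
  · rintro h ⟨hh, t, htT, ht⟩
    have htm : t ∈ pimg m := hh.2.2.pimg_eq ▸ ⟨p₀, ht⟩
    exact ⟨t, ⟨htm, htT⟩, ht.symm⟩
  · rintro _ ⟨t, ⟨htm, htT⟩, rfl⟩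
    have hfib : {h | h ∈ {h ∈ greenHClass M m | ∃ t ∈ T, h p₀ = some t} ∧ h p₀ = some t} =
        {h ∈ greenHClass M m | h p₀ = some t} := by
      ext h
      exact ⟨fun ⟨⟨hh, _⟩, ht⟩ => ⟨hh, ht⟩, fun ⟨hh, ht⟩ => ⟨⟨hh, t, htT, ht⟩, ht⟩⟩
    rw [hfib]
    exact (hm.ncard_fiber_le hM htrans p₀ htm ht₀m).antisymm
      (hm.ncard_fiber_le hM htrans p₀ ht₀m htm)

theorem ncard_greenHClass (hm : IsMinRank M m)
    (htrans : ∀ p ∈ pimg m, ∀ q ∈ pimg m, ∃ x ∈ M, x p = some q)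
    {p₀ : σ} (hp₀ : p₀ ∈ pimg m) :
    (greenHClass M m).ncard =
      (pimg m).ncard * {h ∈ greenHClass M m | h p₀ = m p₀}.ncard := by
  rw [← Set.inter_univ (pimg m), ← hm.ncard_greenHClass_sep hM htrans hp₀]
  congr 1
  ext h
  refine ⟨fun hh => ⟨hh, ?_⟩, fun hh => hh.1⟩
  obtain ⟨t, ht⟩ := Option.ne_none_iff_exists'.mp (hm.apply_ne_none hM hh.1 hp₀)
  exact ⟨t, trivial, ht⟩

theorem exists_mem_pimg_apply_eq_apply (hm : IsMinRank M m) (hx : IsMinRank M x) {q : σ}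
    (hq : q ∈ pimg x) : ∃ p ∈ pimg m, m p = m q := by
  obtain ⟨t, ht⟩ := Option.ne_none_iff_exists'.mp (hx.apply_ne_none hM hm.1 hq)
  have hmm : pimg (pcomp m m) = pimg m :=
    hm.pimg_eq_of_subset hM (hM.pcomp_mem hm.1 hm.1) (pimg_pcomp_subset m m)
  have : some t ∈ some '' pimg (pcomp m m) := ⟨t, hmm ▸ ⟨q, ht⟩, rfl⟩
  rw [some_image_pimg_pcomp] at this
  obtain ⟨⟨p, hp, hpt⟩, -⟩ := this
  exact ⟨p, hp, hpt.trans ht.symm⟩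

end IsMinRank

end MinimalRank

section Automaton

variable {A : Type*} {S : Set (List A)}

theorem leftQuot_append (S : Set (List A)) (u v : List A) :
    leftQuot S (u ++ v) = leftQuot (leftQuot S u) v := by
  ext x
  simp [leftQuot, List.append_assoc]

theorem transMap_eq_some_iff {q t : Set (List A)} {u : List A} :
    transMap S u q = some t ↔ q ∈ MinStates S ∧ (leftQuot q u).Nonempty ∧ leftQuot q u = t := by
  by_cases h : q ∈ MinStates S ∧ (leftQuot q u).Nonempty
  · simp [transMap, h]
  · simp only [transMap, if_neg h, reduceCtorEq, false_iff]
    exact fun h' => h ⟨h'.1, h'.2.1⟩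

theorem transMap_eq_none_of_notMem {q : Set (List A)} (hq : q ∉ MinStates S) (u : List A) :
    transMap S u q = none := by
  simp [transMap, hq]

theorem pimg_transMap (u : List A) :
    pimg (transMap S u) = {T | T.Nonempty ∧ ∃ v, T = leftQuot S (v ++ u)} := by
  ext t
  simp only [pimg, transMap_eq_some_iff, MinStates, Set.mem_ofPred_eq]
  constructor
  · rintro ⟨_, ⟨-, v, rfl⟩, hne, rfl⟩
    exact ⟨hne, v, (leftQuot_append S v u).symm⟩
  · rintro ⟨hne, v, rfl⟩
    rw [leftQuot_append] at hne
    exact ⟨leftQuot S v, ⟨⟨_, hne.some_mem⟩, v, rfl⟩, hne, (leftQuot_append S v u).symm⟩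

theorem mrank_eq_ncard_pimg (u : List A) : mrank S u = (pimg (transMap S u)).ncard := by
  rw [pimg_transMap, mrank]

theorem leftQuot_mem_minStates {q : Set (List A)} (hq : q ∈ MinStates S) {u : List A}
    (hne : (leftQuot q u).Nonempty) : leftQuot q u ∈ MinStates S := by
  obtain ⟨-, v, rfl⟩ := hq
  exact ⟨hne, v ++ u, (leftQuot_append S v u).symm⟩

theorem transMap_append (u v : List A) :
    transMap S (u ++ v) = pcomp (transMap S u) (transMap S v) := by
  funext q
  apply Option.ext
  intro t
  simp only [pcomp, Option.bind_eq_some_iff, transMap_eq_some_iff, leftQuot_append]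
  constructor
  · rintro ⟨hq, hne, rfl⟩
    have hne' : (leftQuot q u).Nonempty := ⟨v ++ hne.some, hne.some_mem⟩
    exact ⟨_, ⟨hq, hne', rfl⟩, leftQuot_mem_minStates hq hne', hne, rfl⟩
  · rintro ⟨_, ⟨hq, -, rfl⟩, -, hne, rfl⟩
    exact ⟨hq, hne, rfl⟩

theorem pimg_subset_minStates {x : Set (List A) → Option (Set (List A))}
    (hx : x ∈ transMonoid S) : pimg x ⊆ MinStates S := by
  obtain ⟨u, rfl⟩ := hx
  rintro t ⟨q, hqt⟩
  obtain ⟨hq, hne, rfl⟩ := transMap_eq_some_iff.mp hqt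
  exact leftQuot_mem_minStates hq hne

theorem pimg_nonempty {x : Set (List A) → Option (Set (List A))} (hdense : LangDense S)
    (hx : x ∈ transMonoid S) : (pimg x).Nonempty := by
  obtain ⟨u, rfl⟩ := hx
  obtain ⟨v, v', h⟩ := hdense u
  rw [pimg_transMap]
  exact ⟨leftQuot S (v ++ u), ⟨v', h⟩, v, rfl⟩

theorem isFinitePSemigroup_transMonoid (hS : Recognizable S) :
    IsFinitePSemigroup (transMonoid S) where
  pcomp_mem := by
    rintro _ _ ⟨u, rfl⟩ ⟨v, rfl⟩
    exact ⟨u ++ v, transMap_append u v⟩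
  finite := by
    refine finite_of_pimg_subset (hS.subset ?_) ?_ fun _ => pimg_subset_minStates
    · rintro q ⟨-, u, rfl⟩
      exact ⟨u, rfl⟩
    · rintro _ ⟨u, rfl⟩ q hq
      exact transMap_eq_none_of_notMem hq u
  finite_pimg hx := (hS.subset (by rintro q ⟨-, u, rfl⟩; exact ⟨u, rfl⟩)).subset
    (pimg_subset_minStates hx)

theorem isMinRank_transMap (hS : Recognizable S) (hdense : LangDense S) {w : List A}
    (hw : IsMinNonzeroMrank S w) : IsMinRank (transMonoid S) (transMap S w) := by
  refine ⟨⟨w, rfl⟩, ?_⟩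
  rintro _ ⟨u, rfl⟩
  rw [← mrank_eq_ncard_pimg, ← mrank_eq_ncard_pimg]
  refine hw.2 u (mrank_eq_ncard_pimg u ▸ ((Set.ncard_pos ?_).mpr ?_).ne')
  · exact (isFinitePSemigroup_transMonoid hS).finite_pimg ⟨u, rfl⟩
  · exact pimg_nonempty hdense ⟨u, rfl⟩

theorem exists_mem_transMonoid_apply_eq (hrec : Recurrent S) {p q : Set (List A)}
    (hp : p ∈ MinStates S) (hq : q ∈ MinStates S) : ∃ x ∈ transMonoid S, x p = some q := by
  obtain ⟨hpne, u, rfl⟩ := hp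
  obtain ⟨hqne, v, rfl⟩ := hq
  obtain ⟨z, hz⟩ := hrec.2 u v hpne hqne
  rw [leftQuot_append] at hz
  exact ⟨_, ⟨z, rfl⟩, transMap_eq_some_iff.mpr ⟨⟨hpne, u, rfl⟩, hz ▸ hqne, hz⟩⟩

theorem exists_eq_transMap_iff {x : Set (List A) → Option (Set (List A))}
    (hx : x ∈ transMonoid S) : (∃ u ∈ S, x = transMap S u) ↔ ∃ t, [] ∈ t ∧ x S = some t := by
  obtain ⟨v, rfl⟩ := hx
  constructor
  · rintro ⟨u, hu, he⟩
    have hnil : [] ∈ leftQuot S u := by simpa [leftQuot] using hu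
    rw [he]
    exact ⟨_, hnil, transMap_eq_some_iff.mpr ⟨⟨⟨u, hu⟩, [], rfl⟩, ⟨[], hnil⟩, rfl⟩⟩
  · rintro ⟨t, ht, hvt⟩
    obtain ⟨-, -, rfl⟩ := transMap_eq_some_iff.mp hvt
    exact ⟨v, by simpa [leftQuot] using ht, rfl⟩


theorem exists_mem_pimg_apply_eq_apply_initial (hrec : Recurrent S) (hdense : LangDense S)
    {m : Set (List A) → Option (Set (List A))} (hm : IsMinRank (transMonoid S) m) :
    ∃ p₀ ∈ pimg m, m p₀ = m S := by
  have hM := isFinitePSemigroup_transMonoid hrec.1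
  obtain ⟨u, u', hS⟩ := hdense []
  obtain ⟨j, q, hqj⟩ := pimg_nonempty hdense hm.1
  obtain ⟨x, hx, hxj⟩ := exists_mem_transMonoid_apply_eq hrec
    (pimg_subset_minStates hm.1 ⟨q, hqj⟩) (show S ∈ MinStates S from ⟨⟨_, hS⟩, [], rfl⟩)
  refine hm.exists_mem_pimg_apply_eq_apply hM (hm.pcomp_right hM hx) ⟨q, ?_⟩
  simp [pcomp, hqj, hxj]

theorem greenHClass_inter_eq {m : Set (List A) → Option (Set (List A))} {p₀ : Set (List A)}
    (hp₀ : m p₀ = m S) :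
    greenHClass (transMonoid S) m ∩ {n | ∃ u ∈ S, n = transMap S u} =
      {h ∈ greenHClass (transMonoid S) m | ∃ t ∈ {t : Set (List A) | [] ∈ t}, h p₀ = some t} := by
  ext h
  constructor
  · rintro ⟨hh, hhS⟩
    obtain ⟨t, ht, hSt⟩ := (exists_eq_transMap_iff hh.1).mp hhS
    exact ⟨hh, t, ht, (hh.2.1.apply_eq_apply hp₀).trans hSt⟩
  · rintro ⟨hh, t, ht, hpt⟩
    exact ⟨hh, (exists_eq_transMap_iff hh.1).mpr
      ⟨t, ht, (hh.2.1.apply_eq_apply hp₀).symm.trans hpt⟩⟩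

/-- Each `q·w` is some `j·w` with `j ∈ pimg m`, saturation makes `j` terminal iff `q` is, and
`w` is injective on `pimg m`. -/
theorem ncard_terminal_images (hS : Recognizable S) {m : Set (List A) → Option (Set (List A))}
    (hm : IsMinRank (transMonoid S) m) {w : List A}
    (hw : IsMinRank (transMonoid S) (transMap S w)) (hsat : SaturatedBy S w) :
    {T | ∃ q ∈ TerminalStates S, T = leftQuot q w}.ncard =
      (pimg m ∩ {t | [] ∈ t}).ncard := by
  have hM := isFinitePSemigroup_transMonoid hS
  have hwj : ∀ j ∈ pimg m, transMap S w j = some (leftQuot j w) := fun j hj => by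
    obtain ⟨t, ht⟩ := Option.ne_none_iff_exists'.mp (hm.apply_ne_none hM hw.1 hj)
    obtain ⟨-, -, rfl⟩ := transMap_eq_some_iff.mp ht
    exact ht
  have hmw : pimg (pcomp m (transMap S w)) = pimg (transMap S w) :=
    hw.pimg_eq_of_subset hM (hM.pcomp_mem hm.1 hw.1) (pimg_pcomp_subset _ _)
  have hinj : Set.InjOn (fun j => leftQuot j w) (pimg m ∩ {t | [] ∈ t}) :=
    fun j hj j' hj' hjj' => hm.injOn hM hw.1 hj.1 hj'.1 <| by
      rw [hwj j hj.1, hwj j' hj'.1]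
      exact congrArg some hjj'
  rw [← hinj.ncard_image]
  congr 1
  ext T
  constructor
  · rintro ⟨q, hq, rfl⟩
    have hqw : some (leftQuot q w) ∈ some '' pimg (pcomp m (transMap S w)) :=
      ⟨_, hmw ▸ ⟨q, transMap_eq_some_iff.mpr ⟨hq.1, hsat.1 q hq, rfl⟩⟩, rfl⟩
    rw [some_image_pimg_pcomp] at hqw
    obtain ⟨⟨j, hj, hjq⟩, -⟩ := hqw
    obtain ⟨hjmin, hjne, hjw⟩ := transMap_eq_some_iff.mp hjq
    exact ⟨j, ⟨hj, (hsat.2 j q hjmin hq.1 hjne (hsat.1 q hq) hjw).mpr hq.2⟩, hjw⟩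
  · rintro ⟨j, ⟨hj, hjT⟩, rfl⟩
    exact ⟨j, ⟨pimg_subset_minStates hm.1 hj, hjT⟩, rfl⟩

end Automaton

end Birec

open Birec

theorem index_eq_card_H_div_card_H_inter_general {A : Type*} (S : Set (List A))
    (hdense : LangDense S) (hbi : Birecurrent S)
    (w : List A) (hw : IsMinNonzeroMrank S w) (hsat : SaturatedBy S w)
    (K : Set (Set (List A) → Option (Set (List A))))
    (hK : IsMinimalIdeal (transMonoid S) K)
    (m : Set (List A) → Option (Set (List A))) (hm : m ∈ K) :
    (mrank S w : ℚ) /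
        (({T : Set (List A) | ∃ q ∈ TerminalStates S, T = leftQuot q w}.ncard : ℚ)) =
      ({n | n ∈ transMonoid S ∧ GreenH (transMonoid S) n m}.ncard : ℚ) /
        (({n | n ∈ transMonoid S ∧ GreenH (transMonoid S) n m} ∩
            {n | ∃ u ∈ S, n = transMap S u}).ncard : ℚ) := by
  have hrec := hbi.1
  have hM := isFinitePSemigroup_transMonoid hrec.1
  have hwmin := isMinRank_transMap hrec.1 hdense hw
  have hmmin := hwmin.of_mem_isMinimalIdeal hM hK hm
  have htrans : ∀ p ∈ pimg m, ∀ q ∈ pimg m, ∃ x ∈ transMonoid S, x p = some q :=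
    fun p hp q hq => exists_mem_transMonoid_apply_eq hrec
      (pimg_subset_minStates hmmin.1 hp) (pimg_subset_minStates hmmin.1 hq)
  obtain ⟨p₀, hp₀, hp₀S⟩ := exists_mem_pimg_apply_eq_apply_initial hrec hdense hmmin
  have hN : {h ∈ greenHClass (transMonoid S) m | h p₀ = m p₀}.ncard ≠ 0 :=
    Set.ncard_ne_zero_of_mem (a := m) ⟨hmmin.mem_greenHClass_self hM, rfl⟩
      (hM.finite.subset fun _ hh => hh.1.1)
  change _ = ((greenHClass (transMonoid S) m).ncard : ℚ) /
    ((greenHClass (transMonoid S) m ∩ _).ncard : ℚ)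
  rw [mrank_eq_ncard_pimg, hwmin.ncard_pimg_eq hmmin,
    ncard_terminal_images hrec.1 hmmin hwmin hsat, greenHClass_inter_eq hp₀S,
    hmmin.ncard_greenHClass hM htrans hp₀, hmmin.ncard_greenHClass_sep hM htrans hp₀]
  push_cast
  exact (mul_div_mul_right _ _ (by exact_mod_cast hN)).symm

/-- **Proposition.** Let `S` be a dense birecurrent set with minimal automaton `𝒜`.
For every `𝓗`-class `H` of the minimal ideal of the transition monoid `φ_𝒜(A*)`,
`i(S) = Card(H) / Card(H ∩ φ_𝒜(S))`, where the index `i(S) = d / k` is computed from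
any word `w` of minimal nonzero rank `d` saturating the set of terminal states, `k`
being the number of classes of the kernel of `w` whose union is the terminal set
(equivalently, the number of images of terminal states under `w`). -/
theorem index_eq_card_H_div_card_H_inter {A : Type*} [Fintype A] (S : Set (List A))
    (hdense : LangDense S) (hbi : Birecurrent S)
    (w : List A) (hw : IsMinNonzeroMrank S w) (hsat : SaturatedBy S w)
    (K : Set (Set (List A) → Option (Set (List A))))
    (hK : IsMinimalIdeal (transMonoid S) K)
    (m : Set (List A) → Option (Set (List A))) (hm : m ∈ K) :
    (mrank S w : ℚ) /
        (({T : Set (List A) | ∃ q ∈ TerminalStates S, T = leftQuot q w}.ncard : ℚ)) =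
      ({n | n ∈ transMonoid S ∧ GreenH (transMonoid S) n m}.ncard : ℚ) /
        (({n | n ∈ transMonoid S ∧ GreenH (transMonoid S) n m} ∩
            {n | ∃ u ∈ S, n = transMap S u}).ncard : ℚ) :=
  index_eq_card_H_div_card_H_inter_general S hdense hbi w hw hsat K hK m hm
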